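/- For any field K and any finite-dimensional K-algebra R, there exists a finite-dimensional K⟨X,Y⟩-module M with End(M) ≅ R; combined with a full exact embedding G : mod K⟨X,Y⟩ → rep(Δ), it follows that every finite-dimensional K-algebra arises as the endomorphism algebra of a finite-dimensional representation of the quiver Δ with one arrow 2 → 1 and two arrows 3 → 1. -/

import Mathlib

/-- A representation of the quiver `Δ` with vertices `1` (sink), `2`, `3` (sources),
one arrow `α : 2 → 1` and two arrows `β, γ : 3 → 1`. -/
structure DeltaRep (k : Type) [Field k] : Type 1 where
  V1 : Type
  V2 : Type
  V3 : Type
  [ac1 : AddCommGroup V1]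
  [ac2 : AddCommGroup V2]
  [ac3 : AddCommGroup V3]
  [mo1 : Module k V1]
  [mo2 : Module k V2]
  [mo3 : Module k V3]
  α : V2 →ₗ[k] V1
  β : V3 →ₗ[k] V1
  γ : V3 →ₗ[k] V1

attribute [instance] DeltaRep.ac1 DeltaRep.ac2 DeltaRep.ac3
attribute [instance] DeltaRep.mo1 DeltaRep.mo2 DeltaRep.mo3

/-- A morphism of representations of the quiver `Δ`. -/
@[ext] structure DeltaHom {k : Type} [Field k] (M N : DeltaRep k) where
  f1 : M.V1 →ₗ[k] N.V1
  f2 : M.V2 →ₗ[k] N.V2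
  f3 : M.V3 →ₗ[k] N.V3
  commα : f1 ∘ₗ M.α = N.α ∘ₗ f2
  commβ : f1 ∘ₗ M.β = N.β ∘ₗ f3
  commγ : f1 ∘ₗ M.γ = N.γ ∘ₗ f3

/-- The endomorphism algebra of a representation `M` of `Δ`, as a subalgebra of the
product of the endomorphism algebras at the three vertices. -/
def DeltaEnd (k : Type) [Field k] (M : DeltaRep k) :
    Subalgebra k ((Module.End k M.V1) × (Module.End k M.V2) × (Module.End k M.V3)) where
  carrier := {f | f.1 ∘ₗ M.α = M.α ∘ₗ f.2.1 ∧ f.1 ∘ₗ M.β = M.β ∘ₗ f.2.2 ∧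
    f.1 ∘ₗ M.γ = M.γ ∘ₗ f.2.2}
  mul_mem' := by
    rintro ⟨a1, a2, a3⟩ ⟨b1, b2, b3⟩ ⟨ha1, ha2, ha3⟩ ⟨hb1, hb2, hb3⟩
    refine ⟨?_, ?_, ?_⟩
    · show (a1 * b1) ∘ₗ M.α = M.α ∘ₗ (a2 * b2)
      rw [Module.End.mul_eq_comp, Module.End.mul_eq_comp, LinearMap.comp_assoc, hb1,
        ← LinearMap.comp_assoc, ha1, LinearMap.comp_assoc]
    · show (a1 * b1) ∘ₗ M.β = M.β ∘ₗ (a3 * b3)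
      rw [Module.End.mul_eq_comp, Module.End.mul_eq_comp, LinearMap.comp_assoc, hb2,
        ← LinearMap.comp_assoc, ha2, LinearMap.comp_assoc]
    · show (a1 * b1) ∘ₗ M.γ = M.γ ∘ₗ (a3 * b3)
      rw [Module.End.mul_eq_comp, Module.End.mul_eq_comp, LinearMap.comp_assoc, hb3,
        ← LinearMap.comp_assoc, ha3, LinearMap.comp_assoc]
  add_mem' := by
    rintro ⟨a1, a2, a3⟩ ⟨b1, b2, b3⟩ ⟨ha1, ha2, ha3⟩ ⟨hb1, hb2, hb3⟩
    refine ⟨?_, ?_, ?_⟩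
    · show (a1 + b1) ∘ₗ M.α = M.α ∘ₗ (a2 + b2)
      rw [LinearMap.add_comp, LinearMap.comp_add, ha1, hb1]
    · show (a1 + b1) ∘ₗ M.β = M.β ∘ₗ (a3 + b3)
      rw [LinearMap.add_comp, LinearMap.comp_add, ha2, hb2]
    · show (a1 + b1) ∘ₗ M.γ = M.γ ∘ₗ (a3 + b3)
      rw [LinearMap.add_comp, LinearMap.comp_add, ha3, hb3]
  algebraMap_mem' := by
    intro r
    refine ⟨?_, ?_, ?_⟩ <;> ext v <;> simp [Module.algebraMap_end_apply]

namespace EndoProof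

variable {K R : Type} [Field K] [Ring R] [Algebra K R] {n : ℕ}

variable (K R) in
def shX (n : ℕ) : Module.End K (Fin (n + 2) → R) where
  toFun v i := if (i : ℕ) = 0 then 0 else v ⟨(i : ℕ) - 1, lt_of_le_of_lt (Nat.sub_le _ _) i.isLt⟩
  map_add' v w := by funext i; by_cases h : (i : ℕ) = 0 <;> simp only [Fin.val_eq_zero_iff] at h ⊢ <;> simp [h]
  map_smul' c v := by funext i; by_cases h : (i : ℕ) = 0 <;> simp only [Fin.val_eq_zero_iff] at h ⊢ <;> simp [h]

def opY (t : Fin (n + 2) → R) : Module.End K (Fin (n + 2) → R) where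
  toFun v i := v i * t i + if (i : ℕ) = 0 then v (Fin.last (n + 1)) else 0
  map_add' v w := by
    funext i; by_cases h : (i : ℕ) = 0 <;> simp only [Fin.val_eq_zero_iff] at h ⊢ <;> simp [h, add_mul] <;> abel
  map_smul' c v := by
    funext i; by_cases h : (i : ℕ) = 0 <;> simp only [Fin.val_eq_zero_iff] at h ⊢ <;> simp [h, smul_mul_assoc, smul_add]

@[simp] lemma shX_apply (v : Fin (n+2) → R) (i : Fin (n+2)) :
    shX K R n v i = if (i : ℕ) = 0 then 0 else v ⟨(i : ℕ) - 1, lt_of_le_of_lt (Nat.sub_le _ _) i.isLt⟩ := rfl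

@[simp] lemma opY_apply (t : Fin (n+2) → R) (v : Fin (n+2) → R) (i : Fin (n+2)) :
    opY (K := K) t v i = v i * t i + if (i : ℕ) = 0 then v (Fin.last (n + 1)) else 0 := rfl

-- shX of a single
lemma shX_single (jv : ℕ) (hj : jv + 1 < n + 2) (s : R) :
    shX K R n (Pi.single (⟨jv, by omega⟩ : Fin (n+2)) s) =
      Pi.single (⟨jv + 1, hj⟩ : Fin (n+2)) s := by
  funext i
  by_cases h : (i : ℕ) = 0
  · have : i ≠ ⟨jv + 1, hj⟩ := by
      intro hh; rw [hh] at h; simp at h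
    simp [h, Pi.single_apply, this]
  · rw [shX_apply, if_neg h, Pi.single_apply, Pi.single_apply]
    have : ((⟨(i : ℕ) - 1, lt_of_le_of_lt (Nat.sub_le _ _) i.isLt⟩ : Fin (n+2)) = ⟨jv, by omega⟩)
        ↔ (i = ⟨jv + 1, hj⟩) := by
      rw [Fin.ext_iff, Fin.ext_iff]
      simp only []
      omega
    by_cases h2 : i = ⟨jv + 1, hj⟩
    · rw [if_pos (this.mpr h2), if_pos h2]
    · rw [if_neg (fun hh => h2 (this.mp hh)), if_neg h2]

-- opY of a single
lemma opY_single (t : Fin (n+2) → R) (k : Fin (n+2)) (s : R) :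
    opY (K := K) t (Pi.single k s) =
      Pi.single k (s * t k) + (if (k : ℕ) = n + 1 then Pi.single (0 : Fin (n+2)) s else 0) := by
  funext i
  rw [opY_apply, Pi.add_apply]
  by_cases h : (i : ℕ) = 0
  · have hi : i = 0 := by rwa [Fin.ext_iff]
    subst hi
    rw [if_pos h]
    by_cases hk : (k : ℕ) = n + 1
    · have hk0 : (0 : Fin (n+2)) ≠ k := by
        intro hh; rw [← hh] at hk; simp at hk
      have hlast : Fin.last (n+1) = k := by rw [Fin.ext_iff]; simp [hk]
      rw [if_pos hk, Pi.single_eq_of_ne hk0, Pi.single_eq_of_ne hk0, hlast,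
        Pi.single_eq_same, Pi.single_eq_same, zero_mul, zero_add]
    · have hlast : Fin.last (n+1) ≠ k := by
        intro hh; rw [← hh] at hk; simp at hk
      rw [if_neg hk, Pi.single_eq_of_ne hlast, add_zero, Pi.zero_apply, add_zero]
      by_cases hk0 : (0 : Fin (n+2)) = k
      · subst hk0; rw [Pi.single_eq_same, Pi.single_eq_same]
      · rw [Pi.single_eq_of_ne hk0, Pi.single_eq_of_ne hk0, zero_mul]
  · have hi0 : i ≠ 0 := fun hh => h (by rw [hh]; rfl)
    rw [if_neg h, add_zero]
    have h2 : (if (k : ℕ) = n + 1 then Pi.single (M := fun _ : Fin (n+2) => R) (0 : Fin (n+2)) s else 0) i = 0 := by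
      by_cases hk : (k : ℕ) = n + 1
      · rw [if_pos hk, Pi.single_eq_of_ne hi0]
      · rw [if_neg hk]; rfl
    rw [h2, add_zero]
    by_cases hik : i = k
    · subst hik; rw [Pi.single_eq_same, Pi.single_eq_same]
    · rw [Pi.single_eq_of_ne hik, Pi.single_eq_of_ne hik, zero_mul]



namespace Part1

variable (K) in
def lmul' (n : ℕ) : R →ₐ[K] Module.End K (Fin (n + 2) → R) where
  toFun r :=
    { toFun := fun v i => r * v i
      map_add' := fun v w => by funext i; simp [mul_add]
      map_smul' := fun c v => by funext i; simp [mul_smul_comm] }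
  map_one' := by refine LinearMap.ext fun v => funext fun i => ?_; simp [Module.End.one_apply]
  map_mul' r s := by refine LinearMap.ext fun v => funext fun i => ?_; simp [Module.End.mul_apply, mul_assoc]
  map_zero' := by refine LinearMap.ext fun v => funext fun i => ?_; simp
  map_add' r s := by refine LinearMap.ext fun v => funext fun i => ?_; simp [add_mul]
  commutes' c := by
    refine LinearMap.ext fun v => funext fun i => ?_
    simp [Module.algebraMap_end_apply, Algebra.smul_def]

@[simp] lemma lmul'_apply (r : R) (v : Fin (n+2) → R) (i : Fin (n+2)) :
    lmul' K n r v i = r * v i := rfl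

lemma lmul'_mem (t : Fin (n+2) → R) (r : R) :
    lmul' K n r ∈ Subalgebra.centralizer K {shX K R n, opY (K := K) t} := by
  rw [Subalgebra.mem_centralizer_iff]
  rintro g (rfl | rfl)
  · refine LinearMap.ext fun v => funext fun i => ?_
    by_cases h : (i : ℕ) = 0 <;>
      simp [Module.End.mul_apply, h]
  · refine LinearMap.ext fun v => funext fun i => ?_
    by_cases h : (i : ℕ) = 0 <;>
      simp [Module.End.mul_apply, h, mul_add, mul_assoc]

/-- The parameter family built from a basis. -/
noncomputable def tb (b : Module.Basis (Fin n) K R) : Fin (n+2) → R :=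
  fun i => if h : 1 ≤ (i : ℕ) ∧ (i : ℕ) ≤ n then b ⟨(i : ℕ) - 1, by omega⟩ else 0

lemma tb_zero (b : Module.Basis (Fin n) K R) : tb b 0 = 0 := by simp [tb]

theorem lmul'_surj (b : Module.Basis (Fin n) K R) (f : Module.End K (Fin (n+2) → R))
    (hf : f ∈ Subalgebra.centralizer K {shX K R n, opY (K := K) (tb b)}) :
    ∃ r : R, lmul' K n r = f := by
  rw [Subalgebra.mem_centralizer_iff] at hf
  set t := tb b with ht
  have hX : ∀ v, shX K R n (f v) = f (shX K R n v) := fun v => by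
    simpa [Module.End.mul_apply] using LinearMap.congr_fun (hf (shX K R n) (Set.mem_insert _ _)) v
  have hY : ∀ v, opY (K := K) t (f v) = f (opY (K := K) t v) := fun v => by
    simpa [Module.End.mul_apply] using
      LinearMap.congr_fun (hf (opY (K := K) t) (Set.mem_insert_of_mem _ rfl)) v
  -- Toeplitz structure
  have claim : ∀ (jv : ℕ) (hj : jv < n + 2) (k : Fin (n + 2)) (s : R),
      f (Pi.single ⟨jv, hj⟩ s) k =
        if h : jv ≤ (k : ℕ) then f (Pi.single 0 s) ⟨(k : ℕ) - jv, by omega⟩ else 0 := by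
    intro jv
    induction jv with
    | zero =>
        intro hj k s
        rw [dif_pos (Nat.zero_le _)]
        have h0 : (⟨0, hj⟩ : Fin (n+2)) = 0 := rfl
        have h1 : (⟨(k : ℕ) - 0, by omega⟩ : Fin (n+2)) = k := by
          apply Fin.ext; simp
        rw [h0, h1]
    | succ m ih =>
        intro hj k s
        have hm : m < n + 2 := by omega
        have hsingle : (Pi.single (⟨m + 1, hj⟩ : Fin (n+2)) s) =
            shX K R n (Pi.single (⟨m, by omega⟩ : Fin (n+2)) s) := (shX_single m hj s).symm
        rw [hsingle, ← hX, shX_apply]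
        by_cases hk : (k : ℕ) = 0
        · rw [if_pos hk, dif_neg (by omega)]
        · rw [if_neg hk, ih hm]
          have hidx : ∀ (a c : Fin (n+2)), a = c →
              f (Pi.single 0 s) a = f (Pi.single 0 s) c := fun a c h => by rw [h]
          by_cases h2 : m + 1 ≤ (k : ℕ)
          · rw [dif_pos (show m ≤ ((⟨(k:ℕ)-1, _⟩ : Fin (n+2)) : ℕ) by simp; omega), dif_pos h2]
            exact hidx _ _ (Fin.ext (by simp; omega))
          · rw [dif_neg (show ¬ m ≤ ((⟨(k:ℕ)-1, _⟩ : Fin (n+2)) : ℕ) by simp; omega), dif_neg h2]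
  -- the first column vanishes away from the diagonal
  have colC : ∀ (kv : ℕ) (hk : kv < n + 2) (s : R),
      f (Pi.single 0 s) ⟨n + 1 - kv, by omega⟩ =
        if kv = n + 1 then f (Pi.single 0 s) 0 else 0 := by
    intro kv hk s
    have h0 := congrFun (hY (Pi.single (⟨kv, hk⟩ : Fin (n+2)) s)) 0
    rw [opY_apply, opY_single] at h0
    have ht0 : t 0 = 0 := tb_zero b
    rw [ht0, mul_zero, zero_add, if_pos (show ((0 : Fin (n+2)) : ℕ) = 0 from rfl)] at h0
    have hfs : f (Pi.single (⟨kv, hk⟩ : Fin (n+2)) (s * t ⟨kv, hk⟩)) 0 = 0 := by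
      rw [claim kv hk 0 _]
      by_cases h : kv = 0
      · subst h
        rw [dif_pos (by omega)]
        have h5 : t (⟨0, hk⟩ : Fin (n+2)) = 0 := ht0
        rw [h5, mul_zero]
        simp
      · rw [dif_neg (by simp; omega)]
    have hlast : f (Pi.single (⟨kv, hk⟩ : Fin (n+2)) s) (Fin.last (n+1)) =
        f (Pi.single 0 s) ⟨n + 1 - kv, by omega⟩ := by
      rw [claim kv hk (Fin.last (n+1)) s, dif_pos (by simp; omega)]
      exact congrArg _ (Fin.ext (by simp))
    by_cases hkn : kv = n + 1
    · rw [if_pos hkn]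
      rw [if_pos (show ((⟨kv, hk⟩ : Fin (n+2)) : ℕ) = n + 1 from hkn), map_add] at h0
      rw [hlast] at h0
      rw [h0, Pi.add_apply, hfs, zero_add]
    · rw [if_neg hkn]
      rw [if_neg (show ¬ ((⟨kv, hk⟩ : Fin (n+2)) : ℕ) = n + 1 from hkn), add_zero] at h0
      rw [hlast] at h0
      rw [h0, hfs]
  -- hence : entries of the first column vanish except at the top
  have Czero : ∀ (d : ℕ) (hd : d < n + 2) (_ : 1 ≤ d) (s : R),
      f (Pi.single 0 s) ⟨d, hd⟩ = 0 := by
    intro d hd hd1 s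
    have h6 := colC (n + 1 - d) (by omega) s
    rw [if_neg (by omega)] at h6
    have hidx : (⟨n + 1 - (n + 1 - d), by omega⟩ : Fin (n+2)) = ⟨d, hd⟩ :=
      Fin.ext (by simp; omega)
    rwa [hidx] at h6
  -- the top-left entry as a linear map
  set C0 : R →ₗ[K] R :=
    (LinearMap.proj (0 : Fin (n+2))) ∘ₗ (f ∘ₗ LinearMap.single K (fun _ : Fin (n+2) => R) 0)
    with hC0def
  have hC0 : ∀ s : R, C0 s = f (Pi.single 0 s) 0 := fun s => rfl
  -- diagonal relation : C0 is right multiplicative on basis vectors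
  have diag : ∀ (j : Fin n) (s : R), C0 (s * b j) = C0 s * b j := by
    intro j s
    have hk : ((j : ℕ) + 1) < n + 2 := by omega
    set k : Fin (n + 2) := ⟨(j : ℕ) + 1, hk⟩ with hkdef
    have htk : t k = b j := by
      rw [ht]
      show tb b k = b j
      rw [tb]
      rw [dif_pos (by constructor <;> simp [k] <;> omega)]
      exact congrArg b (Fin.ext (by simp [k]))
    have h0 := congrFun (hY (Pi.single k s)) k
    rw [opY_apply, opY_single] at h0
    rw [if_neg (show ¬ ((k : Fin (n+2)) : ℕ) = 0 by simp [k]), add_zero] at h0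
    rw [if_neg (show ¬ ((k : Fin (n+2)) : ℕ) = n + 1 by simp [k]; omega), add_zero] at h0
    have hd1 : f (Pi.single k s) k = C0 s := by
      rw [hC0 s, claim ((j : ℕ) + 1) hk k s, dif_pos (by simp [k])]
      exact congrArg _ (Fin.ext (by simp [k]))
    have hd2 : f (Pi.single k (s * t k)) k = C0 (s * t k) := by
      rw [hC0 _, claim ((j : ℕ) + 1) hk k _, dif_pos (by simp [k])]
      exact congrArg _ (Fin.ext (by simp [k]))
    rw [hd1, hd2] at h0
    rw [← htk, h0]
  -- C0 is right R-linear
  have rlin : ∀ (s u : R), C0 (s * u) = C0 s * u := by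
    intro s u
    have hmaps : (C0 ∘ₗ LinearMap.mulLeft K s) = LinearMap.mulLeft K (C0 s) := by
      apply Module.Basis.ext b
      intro j
      simpa [LinearMap.mulLeft_apply] using diag j s
    simpa [LinearMap.mulLeft_apply] using LinearMap.congr_fun hmaps u
  refine ⟨C0 1, ?_⟩
  have hC0r : ∀ s : R, C0 s = C0 1 * s := fun s => by
    have := rlin 1 s
    rwa [one_mul] at this
  -- now check equality of the two linear maps
  apply LinearMap.ext
  intro v
  have hv : v = ∑ j : Fin (n+2), Pi.single j (v j) := (Finset.univ_sum_single v).symm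
  conv_rhs => rw [hv]
  rw [map_sum]
  have hsingle : ∀ j : Fin (n+2), f (Pi.single j (v j)) = Pi.single j (C0 1 * v j) := by
    intro j
    funext k
    have hj : (⟨(j : ℕ), j.isLt⟩ : Fin (n+2)) = j := Fin.eta j j.isLt
    have := claim (j : ℕ) j.isLt k (v j)
    rw [hj] at this
    rw [this]
    by_cases h1 : (j : ℕ) ≤ (k : ℕ)
    · rw [dif_pos h1]
      by_cases h2 : (k : ℕ) = (j : ℕ)
      · have hkj : k = j := Fin.ext h2
        have hidx : (⟨(k : ℕ) - (j : ℕ), by omega⟩ : Fin (n+2)) = 0 :=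
          Fin.ext (by simp; omega)
        rw [hidx, ← hC0, hC0r, hkj, Pi.single_eq_same]
      · rw [Czero _ _ (by omega) (v j), Pi.single_eq_of_ne (fun hh => h2 (by rw [hh]))]
    · rw [dif_neg h1, Pi.single_eq_of_ne (fun hh => h1 (by rw [hh]))]
  calc (lmul' K n (C0 1)) v = fun k => C0 1 * v k := rfl
    _ = ∑ j : Fin (n+2), Pi.single j (C0 1 * v j) :=
        (Finset.univ_sum_single (fun k => C0 1 * v k)).symm
    _ = ∑ j : Fin (n+2), f (Pi.single j (v j)) := by
        refine Finset.sum_congr rfl fun j _ => (hsingle j).symm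

noncomputable def part1Equiv (b : Module.Basis (Fin n) K R) :
    ↥(Subalgebra.centralizer K {shX K R n, opY (K := K) (tb b)}) ≃ₐ[K] R :=
  (AlgEquiv.ofBijective
    (AlgHom.codRestrict (lmul' K n) _ (fun r => lmul'_mem (tb b) r))
    ⟨fun r s h => by
        have h2 := congrFun (LinearMap.congr_fun (congrArg Subtype.val h)
          (fun _ => (1 : R))) 0
        simpa using h2,
     fun g => by
        obtain ⟨r, hr⟩ := lmul'_surj b g.1 g.2
        exact ⟨r, Subtype.ext hr⟩⟩).symm

end Part1

section Part2

variable (K) in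
/-- The representation of `Δ` associated to the pair `(shX, opY t)`. -/
noncomputable def Mrep (n : ℕ) (t : Fin (n+2) → R) : DeltaRep K where
  V1 := (Fin (n+2) → R) × (Fin (n+2) → R)
  V2 := Fin (n+2) → R
  V3 := (Fin (n+2) → R) × (Fin (n+2) → R)
  α := LinearMap.prod LinearMap.id 0
  β := LinearMap.id
  γ := LinearMap.prod ((shX K R n) ∘ₗ LinearMap.snd K _ _)
        (LinearMap.fst K _ _ + (opY (K := K) t) ∘ₗ LinearMap.snd K _ _)

lemma mem_deltaEnd_iff (n : ℕ) (t : Fin (n+2) → R)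
    (F : Module.End K ((Fin (n+2) → R) × (Fin (n+2) → R)) ×
         Module.End K (Fin (n+2) → R) ×
         Module.End K ((Fin (n+2) → R) × (Fin (n+2) → R))) :
    F ∈ DeltaEnd K (Mrep K n t) ↔
      F.2.1 ∈ Subalgebra.centralizer K {shX K R n, opY (K := K) t} ∧
      F.1 = F.2.1.prodMap F.2.1 ∧ F.2.2 = F.2.1.prodMap F.2.1 := by
  constructor
  · intro hF
    obtain ⟨hα, hβ, hγ⟩ := hF
    have h13 : F.1 = F.2.2 := by
      exact hβ
    have hαv : ∀ v : Fin (n+2) → R, F.1 (v, 0) = (F.2.1 v, 0) := by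
      intro v
      exact LinearMap.congr_fun hα v
    have hγv : ∀ p : (Fin (n+2) → R) × (Fin (n+2) → R),
        F.1 (shX K R n p.2, p.1 + opY (K := K) t p.2) =
          (shX K R n (F.1 p).2, (F.1 p).1 + opY (K := K) t (F.1 p).2) := by
      intro p
      have := LinearMap.congr_fun hγ p
      rw [← h13] at this
      exact this
    have step1 : ∀ w : Fin (n+2) → R, F.1 (0, w) = (0, F.2.1 w) := by
      intro w
      have h2 := hγv (w, 0)
      simp only [map_zero, add_zero] at h2
      rw [hαv w] at h2
      simpa using h2
    have step2 : F.1 = F.2.1.prodMap F.2.1 := by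
      refine LinearMap.ext fun p => ?_
      have hp : (p.1, p.2) = ((p.1, 0) + (0, p.2) :
          (Fin (n+2) → R) × (Fin (n+2) → R)) := by simp
      calc F.1 p = F.1 ((p.1, 0) + (0, p.2)) := by rw [← hp]
        _ = (F.2.1 p.1, 0) + (0, F.2.1 p.2) := by rw [map_add, hαv, step1]
        _ = (F.2.1 p.1, F.2.1 p.2) := by simp
        _ = F.2.1.prodMap F.2.1 p := rfl
    have hcomm : ∀ w : Fin (n+2) → R,
        F.2.1 (shX K R n w) = shX K R n (F.2.1 w) ∧
        F.2.1 (opY (K := K) t w) = opY (K := K) t (F.2.1 w) := by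
      intro w
      have h2 := hγv (0, w)
      rw [step2] at h2
      simp only [LinearMap.prodMap_apply, zero_add, map_zero] at h2
      exact ⟨congrArg Prod.fst h2, by simpa using congrArg Prod.snd h2⟩
    refine ⟨?_, step2, h13 ▸ step2⟩
    rw [Subalgebra.mem_centralizer_iff]
    rintro g (rfl | rfl)
    · exact LinearMap.ext fun w => by
        simpa [Module.End.mul_apply] using ((hcomm w).1).symm
    · exact LinearMap.ext fun w => by
        simpa [Module.End.mul_apply] using ((hcomm w).2).symm
  · rintro ⟨hc, h1, h3⟩
    rw [Subalgebra.mem_centralizer_iff] at hc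
    have hcX : ∀ w, F.2.1 (shX K R n w) = shX K R n (F.2.1 w) := fun w => by
      have := LinearMap.congr_fun (hc (shX K R n) (Set.mem_insert _ _)) w
      simpa [Module.End.mul_apply] using this.symm
    have hcY : ∀ w, F.2.1 (opY (K := K) t w) = opY (K := K) t (F.2.1 w) := fun w => by
      have := LinearMap.congr_fun (hc (opY (K := K) t) (Set.mem_insert_of_mem _ rfl)) w
      simpa [Module.End.mul_apply] using this.symm
    refine ⟨?_, ?_, ?_⟩
    · refine LinearMap.ext fun v => ?_
      show F.1 (v, 0) = (F.2.1 v, 0)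
      simp [h1]
    · refine LinearMap.ext fun p => ?_
      show F.1 p = F.2.2 p
      simp [h1, h3]
    · refine LinearMap.ext fun p => ?_
      show F.1 (shX K R n p.2, p.1 + opY (K := K) t p.2) =
        (shX K R n (F.2.2 p).2, (F.2.2 p).1 + opY (K := K) t (F.2.2 p).2)
      simp [h1, h3, hcX, hcY]
      exact ⟨rfl, rfl⟩

noncomputable def part2Equiv (n : ℕ) (t : Fin (n+2) → R) :
    ↥(DeltaEnd K (Mrep K n t)) ≃ₐ[K]
      ↥(Subalgebra.centralizer K {shX K R n, opY (K := K) t}) :=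
  AlgEquiv.ofBijective
    (AlgHom.codRestrict
      (((AlgHom.fst K _ _).comp (AlgHom.snd K _ _)).comp (DeltaEnd K (Mrep K n t)).val)
      _ (fun F => ((mem_deltaEnd_iff n t F.1).mp F.2).1))
    ⟨fun F G h => by
        have hval : F.1.2.1 = G.1.2.1 := congrArg Subtype.val h
        obtain ⟨_, hF1, hF2⟩ := (mem_deltaEnd_iff n t F.1).mp F.2
        obtain ⟨_, hG1, hG2⟩ := (mem_deltaEnd_iff n t G.1).mp G.2
        refine Subtype.ext (Prod.ext ?_ (Prod.ext hval ?_))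
        · rw [hF1, hG1, hval]
        · rw [hF2, hG2, hval],
     fun A => ⟨⟨(A.1.prodMap A.1, A.1, A.1.prodMap A.1),
        (mem_deltaEnd_iff n t _).mpr ⟨A.2, rfl, rfl⟩⟩, Subtype.ext rfl⟩⟩

end Part2
end EndoProof

/-- For any field `K` and any finite-dimensional `K`-algebra `R`, there is a
finite-dimensional `K⟨X,Y⟩`-module `M` (a vector space with two endomorphisms) with
`End(M) ≅ R`, and consequently every finite-dimensional `K`-algebra arises as the
endomorphism algebra of a finite-dimensional representation of the quiver `Δ`. -/
theorem every_fd_algebra_is_End_of_KXY_module_and_of_delta_rep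
    (K : Type) [Field K] (R : Type) [Ring R] [Algebra K R] [FiniteDimensional K R] :
    (∃ (V : Type) (_ : AddCommGroup V) (_ : Module K V) (_ : FiniteDimensional K V)
        (X Y : Module.End K V),
      Nonempty (↥(Subalgebra.centralizer K {X, Y}) ≃ₐ[K] R)) ∧
    (∃ M : DeltaRep K, FiniteDimensional K M.V1 ∧ FiniteDimensional K M.V2 ∧
      FiniteDimensional K M.V3 ∧ Nonempty (↥(DeltaEnd K M) ≃ₐ[K] R)) := by
  classical
  set n := Module.finrank K R with hn
  let b : Module.Basis (Fin n) K R := Module.finBasis K R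
  let t := EndoProof.Part1.tb b
  constructor
  · exact ⟨Fin (n+2) → R, inferInstance, inferInstance, inferInstance,
      EndoProof.shX K R n, EndoProof.opY (K := K) t,
      ⟨EndoProof.Part1.part1Equiv b⟩⟩
  · refine ⟨EndoProof.Mrep K n t, ?_, ?_, ?_, ?_⟩
    · exact inferInstanceAs (FiniteDimensional K ((Fin (n+2) → R) × (Fin (n+2) → R)))
    · exact inferInstanceAs (FiniteDimensional K (Fin (n+2) → R))
    · exact inferInstanceAs (FiniteDimensional K ((Fin (n+2) → R) × (Fin (n+2) → R)))
    · exact ⟨(EndoProof.part2Equiv n t).trans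
        ((EndoProof.Part1.part1Equiv b))⟩
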